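/- Let I ⊆ ℝ be an open interval and let f₁,…,f_k : I → ℝ be continuous injections. Define f : I^k → ℝ^k by f(x) = (f₁(x₁),…,f_k(x_k)) for x ∈ I^k, and fix m ≥ 2 positive real weights α₁,…,α_m with sum 1. Then for every subset S ⊆ I with nonempty interior, the infinite iteration 𝓜^ω(S^k) of the quasi-arithmetic mean operator associated with f and the weights α₁,…,α_m is relatively dense in conv(S^k). -/

import Mathlib

set_option maxHeartbeats 1000000


open Set

/-- The quasi-arithmetic mean set `𝓜(S)` of `S` with respect to `f : C → ℝᵏ`
(injective with convex image) and weights `α₁,…,α_m`: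
`𝓜(S) = { f⁻¹(α₁ f(x₁) + ⋯ + α_m f(x_m)) : x₁,…,x_m ∈ S }`,
encoded as the set of `y ∈ C` with `f y = α₁ f(x₁) + ⋯ + α_m f(x_m)`. -/
def meanSet {k m : ℕ} (f : (Fin k → ℝ) → (Fin k → ℝ)) (C : Set (Fin k → ℝ))
    (α : Fin m → ℝ) (S : Set (Fin k → ℝ)) : Set (Fin k → ℝ) :=
  {y | y ∈ C ∧ ∃ x : Fin m → (Fin k → ℝ), (∀ i, x i ∈ S) ∧ f y = ∑ i, α i • f (x i)}

/-- Iterates: `𝓜⁰(S) = S`, `𝓜ⁿ⁺¹(S) = 𝓜(𝓜ⁿ(S))`. -/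
def meanIter {k m : ℕ} (f : (Fin k → ℝ) → (Fin k → ℝ)) (C : Set (Fin k → ℝ))
    (α : Fin m → ℝ) (S : Set (Fin k → ℝ)) : ℕ → Set (Fin k → ℝ)
  | 0 => S
  | n + 1 => meanSet f C α (meanIter f C α S n)

/-- `𝓜^ω(S) = ⋃ₙ 𝓜ⁿ(S)`. -/
def meanOmega {k m : ℕ} (f : (Fin k → ℝ) → (Fin k → ℝ)) (C : Set (Fin k → ℝ))
    (α : Fin m → ℝ) (S : Set (Fin k → ℝ)) : Set (Fin k → ℝ) :=
  ⋃ n, meanIter f C α S n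

/-! ### One-dimensional auxiliary theory -/

/-- One-dimensional quasi-arithmetic mean set. -/
def ms1 {m : ℕ} (g : ℝ → ℝ) (I : Set ℝ) (α : Fin m → ℝ) (A : Set ℝ) : Set ℝ :=
  {y | y ∈ I ∧ ∃ x : Fin m → ℝ, (∀ i, x i ∈ A) ∧ g y = ∑ i, α i * g (x i)}

/-- One-dimensional iterates. -/
def it1 {m : ℕ} (g : ℝ → ℝ) (I : Set ℝ) (α : Fin m → ℝ) (S : Set ℝ) : ℕ → Set ℝ
  | 0 => S
  | n + 1 => ms1 g I α (it1 g I α S n)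

section OneDim

variable {m : ℕ} {g : ℝ → ℝ} {I S : Set ℝ} {α : Fin m → ℝ}

lemma it1_subset_I (hS : S ⊆ I) : ∀ n, it1 g I α S n ⊆ I
  | 0 => hS
  | n + 1 => fun _ hy => hy.1

lemma it1_succ (hα1 : ∑ i, α i = 1) (hS : S ⊆ I) (n : ℕ) :
    it1 g I α S n ⊆ it1 g I α S (n + 1) := by
  intro y hy
  refine ⟨it1_subset_I hS n hy, fun _ => y, fun _ => hy, ?_⟩
  rw [← Finset.sum_mul, hα1, one_mul]

lemma it1_mono (hα1 : ∑ i, α i = 1) (hS : S ⊆ I) {n N : ℕ} (h : n ≤ N) :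
    it1 g I α S n ⊆ it1 g I α S N := by
  induction h with
  | refl => exact subset_rfl
  | step _ ih => exact ih.trans (it1_succ hα1 hS _)

lemma it1_neg : ∀ n, it1 (fun t => -(g t)) I α S n = it1 g I α S n
  | 0 => rfl
  | n + 1 => by
    show ms1 _ I α _ = ms1 _ I α _
    rw [it1_neg n]
    ext y
    simp only [ms1, Set.mem_setOf_eq]
    refine and_congr_right fun _ => exists_congr fun x => and_congr_right fun _ => ?_
    rw [show (∑ i, α i * -g (x i)) = -∑ i, α i * g (x i) by
      rw [← Finset.sum_neg_distrib]; exact Finset.sum_congr rfl fun i _ => mul_neg _ _]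
    exact neg_inj

/-- If `g` is continuous and injective on convex `I`, and `g y` lies between `g p` and `g q`
with `p ≤ q`, then `y` lies between `p` and `q`. -/
lemma between (hIconv : Convex ℝ I) (hgc : ContinuousOn g I) (hgi : Set.InjOn g I)
    {p q y : ℝ} (hp : p ∈ I) (hq : q ∈ I) (hy : y ∈ I) (hpq : p ≤ q)
    (h1 : min (g p) (g q) ≤ g y) (h2 : g y ≤ max (g p) (g q)) : p ≤ y ∧ y ≤ q := by
  rcases eq_or_lt_of_le hpq with rfl | hlt
  · have hgyp : g y = g p := le_antisymm (by simpa using h2) (by simpa using h1)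
    have := hgi hy hp hgyp
    subst this; exact ⟨le_refl _, le_refl _⟩
  · set a := min y p with hadef
    set b := max y q with hbdef
    have hab : a ≤ b := le_trans (min_le_left _ _) (le_max_left _ _)
    have haI : a ∈ I := by rcases min_choice y p with h | h <;> rw [hadef, h] <;> assumption
    have hbI : b ∈ I := by rcases max_choice y q with h | h <;> rw [hbdef, h] <;> assumption
    have hIcc : Icc a b ⊆ I := hIconv.ordConnected.out haI hbI
    have mp : p ∈ Icc a b := ⟨min_le_right _ _, le_trans hpq (le_max_right _ _)⟩
    have mq : q ∈ Icc a b := ⟨le_trans (min_le_right _ _) hpq, le_max_right _ _⟩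
    have my : y ∈ Icc a b := ⟨min_le_left _ _, le_max_left _ _⟩
    rcases ContinuousOn.strictMonoOn_of_injOn_Icc' hab (hgc.mono hIcc) (hgi.mono hIcc)
      with hm | hm
    · have hgpq : g p < g q := hm mp mq hlt
      rw [min_eq_left hgpq.le] at h1
      rw [max_eq_right hgpq.le] at h2
      exact ⟨(hm.le_iff_le mp my).1 h1, (hm.le_iff_le my mq).1 h2⟩
    · have hgqp : g q < g p := hm mp mq hlt
      rw [min_eq_right hgqp.le] at h1
      rw [max_eq_left hgqp.le] at h2
      constructor
      · by_contra h
        push_neg at h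
        exact absurd h2 (not_le.2 (hm my mp h))
      · by_contra h
        push_neg at h
        exact absurd h1 (not_le.2 (hm mq my h))

lemma it1_subset_conv (hm : 2 ≤ m) (hα : ∀ i, 0 < α i) (hα1 : ∑ i, α i = 1)
    (hIconv : Convex ℝ I) (hgc : ContinuousOn g I) (hgi : Set.InjOn g I) (hS : S ⊆ I) :
    ∀ n, it1 g I α S n ⊆ convexHull ℝ S := by
  intro n
  induction n with
  | zero => exact subset_convexHull ℝ S
  | succ n ih =>
    rintro y ⟨hyI, x, hx, hgy⟩
    have hconvI : convexHull ℝ S ⊆ I := convexHull_min hS hIconv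
    have hne : (Finset.univ : Finset (Fin m)).Nonempty := ⟨⟨0, by omega⟩, Finset.mem_univ _⟩
    obtain ⟨j₁, -, hj₁⟩ := Finset.exists_min_image Finset.univ (fun i => g (x i)) hne
    obtain ⟨j₂, -, hj₂⟩ := Finset.exists_max_image Finset.univ (fun i => g (x i)) hne
    have hxc : ∀ i, x i ∈ convexHull ℝ S := fun i => ih (hx i)
    have hlow : g (x j₁) ≤ g y := by
      rw [hgy]
      calc g (x j₁) = ∑ i, α i * g (x j₁) := by rw [← Finset.sum_mul, hα1, one_mul]
        _ ≤ ∑ i, α i * g (x i) :=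
          Finset.sum_le_sum fun i _ =>
            mul_le_mul_of_nonneg_left (hj₁ i (Finset.mem_univ i)) (hα i).le
    have hhigh : g y ≤ g (x j₂) := by
      rw [hgy]
      calc (∑ i, α i * g (x i)) ≤ ∑ i, α i * g (x j₂) :=
            Finset.sum_le_sum fun i _ =>
              mul_le_mul_of_nonneg_left (hj₂ i (Finset.mem_univ i)) (hα i).le
        _ = g (x j₂) := by rw [← Finset.sum_mul, hα1, one_mul]
    rcases le_total (x j₁) (x j₂) with hle | hle
    · have hb := between hIconv hgc hgi (hconvI (hxc j₁)) (hconvI (hxc j₂)) hyI hle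
        (le_trans (min_le_left _ _) hlow) (le_trans hhigh (le_max_right _ _))
      exact (convex_convexHull ℝ S).ordConnected.out (hxc j₁) (hxc j₂) ⟨hb.1, hb.2⟩
    · have hb := between hIconv hgc hgi (hconvI (hxc j₂)) (hconvI (hxc j₁)) hyI hle
        (le_trans (min_le_right _ _) hlow) (le_trans hhigh (le_max_left _ _))
      exact (convex_convexHull ℝ S).ordConnected.out (hxc j₂) (hxc j₁) ⟨hb.1, hb.2⟩

lemma hull_pair {z : ℝ} (hz : z ∈ convexHull ℝ S) :
    ∃ a ∈ S, ∃ b ∈ S, a ≤ b ∧ z ∈ Icc a b := by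
  have key : convexHull ℝ S ⊆ {z | ∃ a ∈ S, ∃ b ∈ S, a ≤ b ∧ z ∈ Icc a b} := by
    apply convexHull_min
    · intro s hs
      exact ⟨s, hs, s, hs, le_refl s, le_refl s, le_refl s⟩
    · rintro x ⟨a₁, ha₁, b₁, hb₁, h₁, hx⟩ y ⟨a₂, ha₂, b₂, hb₂, h₂, hy⟩ θ σ hθ hσ hθσ
      refine ⟨min a₁ a₂, ?_, max b₁ b₂, ?_, ?_, ?_, ?_⟩
      · rcases min_choice a₁ a₂ with h | h <;> rw [h] <;> assumption
      · rcases max_choice b₁ b₂ with h | h <;> rw [h] <;> assumption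
      · calc min a₁ a₂ ≤ a₁ := min_le_left _ _
          _ ≤ b₁ := h₁
          _ ≤ max b₁ b₂ := le_max_left _ _
      · have h1 : θ * min a₁ a₂ ≤ θ * x :=
          mul_le_mul_of_nonneg_left (le_trans (min_le_left _ _) hx.1) hθ
        have h2 : σ * min a₁ a₂ ≤ σ * y :=
          mul_le_mul_of_nonneg_left (le_trans (min_le_right _ _) hy.1) hσ
        have h3 : θ * min a₁ a₂ + σ * min a₁ a₂ = min a₁ a₂ := by
          rw [← add_mul, hθσ, one_mul]
        simp only [smul_eq_mul]
        linarith
      · have h1 : θ * x ≤ θ * max b₁ b₂ :=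
          mul_le_mul_of_nonneg_left (le_trans hx.2 (le_max_left _ _)) hθ
        have h2 : σ * y ≤ σ * max b₁ b₂ :=
          mul_le_mul_of_nonneg_left (le_trans hy.2 (le_max_right _ _)) hσ
        have h3 : θ * max b₁ b₂ + σ * max b₁ b₂ = max b₁ b₂ := by
          rw [← add_mul, hθσ, one_mul]
        simp only [smul_eq_mul]
        linarith
  exact key hz

/-- Core density lemma: if `g` is strictly monotone and continuous on `[a,b]` with
`a, b ∈ S`, `a < b`, then iterated 1D means approximate every point of `[a,b]`. -/
lemma core (hm : 2 ≤ m) (hα : ∀ i, 0 < α i) (hα1 : ∑ i, α i = 1)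
    (hS : S ⊆ I) {a b : ℝ} (ha : a ∈ S) (hb : b ∈ S) (hab : a < b)
    (hIab : Icc a b ⊆ I)
    (hmono : StrictMonoOn g (Icc a b)) (hc : ContinuousOn g (Icc a b))
    {z : ℝ} (hz : z ∈ Icc a b) {ε : ℝ} (hε : 0 < ε) :
    ∃ n y, y ∈ it1 g I α S n ∧ |y - z| < ε := by
  have h0m : 0 < m := by omega
  set i0 : Fin m := ⟨0, h0m⟩ with hi0
  set i1 : Fin m := ⟨1, by omega⟩ with hi1
  have hi10 : i1 ≠ i0 := by simp [hi0, hi1, Fin.ext_iff]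
  have herase : α i0 + ∑ i ∈ Finset.univ.erase i0, α i = 1 := by
    rw [Finset.add_sum_erase Finset.univ α (Finset.mem_univ i0), hα1]
  have hsingle : α i1 ≤ ∑ i ∈ Finset.univ.erase i0, α i :=
    Finset.single_le_sum (fun i _ => (hα i).le)
      (Finset.mem_erase.2 ⟨hi10, Finset.mem_univ _⟩)
  have hα0lt : α i0 < 1 := by linarith [hα i1]
  set lam : ℝ := max (α i0) (1 - α i0) with hlamdef
  have hlam1 : lam < 1 := max_lt hα0lt (by linarith [hα i0])
  have hlam0 : 0 ≤ lam := le_trans (hα i0).le (le_max_left _ _)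
  have mem_a : a ∈ Icc a b := left_mem_Icc.2 hab.le
  have mem_b : b ∈ Icc a b := right_mem_Icc.2 hab.le
  set p : ℝ := max a (z - ε / 2) with hpdef
  set q : ℝ := min b (z + ε / 2) with hqdef
  have hpa : a ≤ p := le_max_left _ _
  have hpz : p ≤ z := max_le hz.1 (by linarith)
  have hzq : z ≤ q := le_min hz.2 (by linarith)
  have hpq : p < q := max_lt (lt_min hab (by linarith [hz.1])) (lt_min (by linarith [hz.2]) (by linarith))
  have hqb : q ≤ b := min_le_left _ _
  have mem_p : p ∈ Icc a b := ⟨hpa, le_trans (le_trans hpz hzq) hqb⟩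
  have mem_q : q ∈ Icc a b := ⟨le_trans hpa (le_trans hpz hzq), hqb⟩
  have huv : g a < g b := hmono mem_a mem_b hab
  have hgpq : g p < g q := hmono mem_p mem_q hpq
  have hgap : g a ≤ g p := (hmono.le_iff_le mem_a mem_p).2 hpa
  have hgqb : g q ≤ g b := (hmono.le_iff_le mem_q mem_b).2 hqb
  set w : ℝ := (g p + g q) / 2 with hwdef
  have claim : ∀ n, ∃ y₁ y₂, y₁ ∈ it1 g I α S n ∧ y₂ ∈ it1 g I α S n ∧
      y₁ ∈ Icc a b ∧ y₂ ∈ Icc a b ∧ g y₁ ≤ w ∧ w ≤ g y₂ ∧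
      g y₂ - g y₁ ≤ lam ^ n * (g b - g a) := by
    intro n
    induction n with
    | zero =>
      exact ⟨a, b, ha, hb, mem_a, mem_b, by rw [hwdef]; linarith, by rw [hwdef]; linarith,
        by simp⟩
    | succ n ih =>
      obtain ⟨y₁, y₂, h1, h2, m1, m2, hw1, hw2, hgapn⟩ := ih
      have hg12 : g y₁ ≤ g y₂ := le_trans hw1 hw2
      have hy12 : y₁ ≤ y₂ := (hmono.le_iff_le m1 m2).1 hg12
      set t0 : ℝ := α i0 * g y₁ + (1 - α i0) * g y₂ with ht0
      have htl : g y₁ ≤ t0 := by nlinarith [hα i0, hα0lt]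
      have htr : t0 ≤ g y₂ := by nlinarith [hα i0, hα0lt]
      obtain ⟨y, hyIcc, hgy⟩ :=
        intermediate_value_Icc hy12 (hc.mono (Icc_subset_Icc m1.1 m2.2)) ⟨htl, htr⟩
      have myab : y ∈ Icc a b := ⟨le_trans m1.1 hyIcc.1, le_trans hyIcc.2 m2.2⟩
      have hy_mem : y ∈ it1 g I α S (n + 1) := by
        refine ⟨hIab myab, fun i => if i = i0 then y₁ else y₂,
          fun i => by dsimp only; split <;> assumption, ?_⟩
        rw [hgy, ← Finset.add_sum_erase Finset.univ _ (Finset.mem_univ i0)]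
        simp only [reduceIte]
        have hrest : ∑ i ∈ Finset.univ.erase i0, α i * g (if i = i0 then y₁ else y₂)
            = (∑ i ∈ Finset.univ.erase i0, α i) * g y₂ := by
          rw [Finset.sum_mul]
          exact Finset.sum_congr rfl fun i hi => by rw [if_neg (Finset.mem_erase.1 hi).1]
        rw [hrest, show (∑ i ∈ Finset.univ.erase i0, α i) = 1 - α i0 by linarith]
      have h1' : y₁ ∈ it1 g I α S (n + 1) := it1_succ hα1 hS n h1
      have h2' : y₂ ∈ it1 g I α S (n + 1) := it1_succ hα1 hS n h2
      have hgapnn : 0 ≤ g y₂ - g y₁ := by linarith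
      rcases le_total w t0 with hwt | hwt
      · refine ⟨y₁, y, h1', hy_mem, m1, myab, hw1, by rw [hgy]; exact hwt, ?_⟩
        have hmul : (1 - α i0) * (g y₂ - g y₁) ≤ lam * (lam ^ n * (g b - g a)) :=
          mul_le_mul (le_max_right _ _) hgapn hgapnn hlam0
        have heq : g y - g y₁ = (1 - α i0) * (g y₂ - g y₁) := by rw [hgy]; ring
        rw [pow_succ]
        nlinarith
      · refine ⟨y, y₂, hy_mem, h2', myab, m2, by rw [hgy]; exact hwt, hw2, ?_⟩
        have hmul : α i0 * (g y₂ - g y₁) ≤ lam * (lam ^ n * (g b - g a)) :=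
          mul_le_mul (le_max_left _ _) hgapn hgapnn hlam0
        have heq : g y₂ - g y = α i0 * (g y₂ - g y₁) := by rw [hgy]; ring
        rw [pow_succ]
        nlinarith
  obtain ⟨n, hn⟩ := exists_pow_lt_of_lt_one
    (show (0 : ℝ) < (g q - g p) / (2 * (g b - g a)) from
      div_pos (by linarith) (by linarith)) hlam1
  obtain ⟨y₁, y₂, h1, h2, m1, m2, hw1, hw2, hgapn⟩ := claim n
  have hlt : lam ^ n * (g b - g a) < (g q - g p) / 2 := by
    have h := mul_lt_mul_of_pos_right hn (show (0 : ℝ) < g b - g a by linarith)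
    have hba : g b - g a ≠ 0 := ne_of_gt (by linarith)
    have heq : (g q - g p) / (2 * (g b - g a)) * (g b - g a) = (g q - g p) / 2 := by
      field_simp
    linarith
  have hgy₁p : g p ≤ g y₁ := by rw [hwdef] at hw1 hw2; linarith
  have hgy₁q : g y₁ ≤ g q := by rw [hwdef] at hw1; linarith
  have hp' : p ≤ y₁ := (hmono.le_iff_le mem_p m1).1 hgy₁p
  have hq' : y₁ ≤ q := (hmono.le_iff_le m1 mem_q).1 hgy₁q
  refine ⟨n, y₁, h1, ?_⟩
  rw [abs_sub_lt_iff]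
  have hple : z - ε / 2 ≤ p := le_max_right _ _
  have hqle : q ≤ z + ε / 2 := min_le_right _ _
  constructor <;> linarith

/-- One-dimensional density: iterated means approximate every point of `conv S`. -/
lemma density1 (hm : 2 ≤ m) (hα : ∀ i, 0 < α i) (hα1 : ∑ i, α i = 1)
    (hIconv : Convex ℝ I) (hgc : ContinuousOn g I) (hgi : Set.InjOn g I) (hS : S ⊆ I)
    {z ε : ℝ} (hz : z ∈ convexHull ℝ S) (hε : 0 < ε) :
    ∃ n y, y ∈ it1 g I α S n ∧ |y - z| < ε := by
  obtain ⟨a, ha, b, hb, hab, hza, hzb⟩ := hull_pair hz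
  rcases eq_or_lt_of_le hab with rfl | hlt
  · have hz' : z = a := le_antisymm hzb hza
    exact ⟨0, a, ha, by rw [hz']; simpa using hε⟩
  · have hIab : Icc a b ⊆ I := hIconv.ordConnected.out (hS ha) (hS hb)
    rcases ContinuousOn.strictMonoOn_of_injOn_Icc' hlt.le (hgc.mono hIab) (hgi.mono hIab)
      with hmono | hanti
    · exact core hm hα hα1 hS ha hb hlt hIab hmono (hgc.mono hIab) ⟨hza, hzb⟩ hε
    · have hmono' : StrictMonoOn (fun t => -(g t)) (Icc a b) :=
        fun x hx y hy hxy => neg_lt_neg (hanti hx hy hxy)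
      have hc' : ContinuousOn (fun t => -(g t)) (Icc a b) := (hgc.mono hIab).neg
      obtain ⟨n, y, hy, hyz⟩ :=
        core hm hα hα1 hS ha hb hlt hIab hmono' hc' ⟨hza, hzb⟩ hε
      rw [it1_neg] at hy
      exact ⟨n, y, hy, hyz⟩

end OneDim

/-! ### Product decomposition -/

lemma meanSet_pi {k m : ℕ} (g : Fin k → ℝ → ℝ) (I : Set ℝ) (α : Fin m → ℝ)
    (A : Fin k → Set ℝ) :
    meanSet (fun x i => g i (x i)) {x : Fin k → ℝ | ∀ i, x i ∈ I} α
        {x : Fin k → ℝ | ∀ j, x j ∈ A j}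
      = {x : Fin k → ℝ | ∀ j, x j ∈ ms1 (g j) I α (A j)} := by
  ext y
  constructor
  · rintro ⟨hyC, x, hx, hfy⟩ j
    refine ⟨hyC j, fun i => x i j, fun i => hx i j, ?_⟩
    have := congrFun hfy j
    simpa [Finset.sum_apply] using this
  · intro h
    simp only [ms1, Set.mem_setOf_eq] at h
    choose hI x hx hg using h
    exact ⟨hI, fun i j => x j i, fun i j => hx j i,
      funext fun j => by simpa [Finset.sum_apply] using hg j⟩

lemma meanIter_pi {k m : ℕ} (g : Fin k → ℝ → ℝ) (I : Set ℝ) (α : Fin m → ℝ)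
    (S : Set ℝ) : ∀ n,
    meanIter (fun x i => g i (x i)) {x : Fin k → ℝ | ∀ i, x i ∈ I} α
        {x : Fin k → ℝ | ∀ j, x j ∈ S} n
      = {x : Fin k → ℝ | ∀ j, x j ∈ it1 (g j) I α S n}
  | 0 => rfl
  | n + 1 => by
    show meanSet _ _ _ _ = _
    rw [meanIter_pi g I α S n, meanSet_pi]
    rfl

/-- Corollary (extension of Green–Gustin to boxes): `I ⊆ ℝ` an open interval
(i.e. an open convex subset of `ℝ`), `f₁,…,f_k : I → ℝ` continuous injections,
`f(x) = (f₁(x₁),…,f_k(x_k))` on `I^k`. For every `S ⊆ I` with nonempty interior,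
`𝓜^ω(S^k)` is relatively dense in `conv (S^k)`. -/
theorem stmt5 {k m : ℕ} (hk : 1 ≤ k) (hm : 2 ≤ m)
    (I : Set ℝ) (hIopen : IsOpen I) (hIints : Convex ℝ I)
    (g : Fin k → ℝ → ℝ) (hgc : ∀ i, ContinuousOn (g i) I) (hgi : ∀ i, Set.InjOn (g i) I)
    (α : Fin m → ℝ) (hα : ∀ i, 0 < α i) (hα1 : ∑ i, α i = 1)
    (S : Set ℝ) (hS : S ⊆ I) (hSint : (interior S).Nonempty) :
    convexHull ℝ {x : Fin k → ℝ | ∀ i, x i ∈ S} ⊆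
      closure (meanOmega (fun x i => g i (x i)) {x : Fin k → ℝ | ∀ i, x i ∈ I} α
          {x : Fin k → ℝ | ∀ i, x i ∈ S} ∩
        convexHull ℝ {x : Fin k → ℝ | ∀ i, x i ∈ S}) := by
  have hhull : convexHull ℝ {x : Fin k → ℝ | ∀ i, x i ∈ S}
      = {x : Fin k → ℝ | ∀ i, x i ∈ convexHull ℝ S} := by
    have hpi : {x : Fin k → ℝ | ∀ i, x i ∈ S} = Set.pi Set.univ (fun _ => S) := by
      ext x; simp [Set.mem_pi]
    rw [hpi, convexHull_pi]
    ext x; simp [Set.mem_pi]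
  intro z hz
  rw [Metric.mem_closure_iff]
  intro ε hε
  have hz' : ∀ j, z j ∈ convexHull ℝ S := by rw [hhull] at hz; exact hz
  have key : ∀ j : Fin k, ∃ n y, y ∈ it1 (g j) I α S n ∧ |y - z j| < ε := fun j =>
    density1 hm hα hα1 hIints (hgc j) (hgi j) hS (hz' j) hε
  choose n y hy1 hy2 using key
  set N : ℕ := Finset.univ.sup n with hN
  have hyN : ∀ j, y j ∈ it1 (g j) I α S N := fun j =>
    it1_mono hα1 hS (Finset.le_sup (Finset.mem_univ j)) (hy1 j)
  refine ⟨y, ⟨?_, ?_⟩, ?_⟩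
  · exact Set.mem_iUnion.2 ⟨N, by rw [meanIter_pi]; exact hyN⟩
  · rw [hhull]
    exact fun j => it1_subset_conv hm hα hα1 hIints (hgc j) (hgi j) hS N (hyN j)
  · refine (dist_pi_lt_iff hε).2 fun j => ?_
    rw [Real.dist_eq, abs_sub_comm]
    exact hy2 j
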